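/- Suppose M_T ∈ D^{1,2} with ‖DM_T‖_{L²([0,T])} ≤ β√(1−ρ²)·√T almost surely, where M_T = sup_{t∈[0,T]} X_t and m_T := E[M_T] satisfies m_T → x as T → 0. Then for every b > x there exist T₀ > 0 and C > 0 such that for all T ≤ T₀, P(M_T ≥ b) ≤ exp(−(b−x)²/(C²T)). -/
import Mathlib


open MeasureTheory Set Filter

/- STATEMENT 11 (tail estimate for the running maximum).  The Malliavin bound
`‖DM_T‖ ≤ β√(1−ρ²)√T` a.s. yields (via the concentration inequality, assumed here
as stated in the context) `P(M_T − m_T ≥ λ) ≤ exp(−λ²/(2c²T))` with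
`c = β√(1−ρ²)`; together with `m_T → x` this gives: for every `b > x` there are
`T₀ > 0` and `C > 0` with `P(M_T ≥ b) ≤ exp(−(b−x)²/(C²T))` for `T ≤ T₀`. -/
theorem stmt11
    {Ω : Type*} [MeasurableSpace Ω] (P : Measure Ω) [IsProbabilityMeasure P]
    (x β ρ : ℝ) (hβ : 0 < β) (hρ : ρ ∈ Ioo (-1 : ℝ) 1)
    (M : ℝ → Ω → ℝ) (hmeas : ∀ T, Measurable (M T))
    (m : ℝ → ℝ) (hm : ∀ T, m T = ∫ ω, M T ω ∂P)
    (hmx : Tendsto m (nhdsWithin 0 (Ioi 0)) (nhds x))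
    (hconc : ∀ T : ℝ, 0 < T → ∀ lam : ℝ, 0 ≤ lam →
      (P {ω | m T + lam ≤ M T ω}).toReal ≤
        Real.exp (-(lam ^ 2) / (2 * (β * Real.sqrt (1 - ρ ^ 2)) ^ 2 * T))) :
    ∀ b : ℝ, x < b → ∃ T₀ > 0, ∃ C > 0, ∀ T : ℝ, 0 < T → T ≤ T₀ →
      (P {ω | b ≤ M T ω}).toReal ≤ Real.exp (-((b - x) ^ 2) / (C ^ 2 * T)) := by
  intro b hb
  set c := β * Real.sqrt (1 - ρ ^ 2) with hc
  have hρ2 : 0 < 1 - ρ ^ 2 := by nlinarith [hρ.1, hρ.2]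
  have hcpos : 0 < c := mul_pos hβ (Real.sqrt_pos.mpr hρ2)
  have hε : 0 < (b - x) / 2 := by linarith
  obtain ⟨δ, hδpos, hδ⟩ := Metric.tendsto_nhdsWithin_nhds.mp hmx ((b - x) / 2) hε
  refine ⟨δ / 2, by positivity, 2 * Real.sqrt 2 * c, by positivity, ?_⟩
  intro T hT hTle
  have hdist : dist T 0 < δ := by
    rw [Real.dist_eq, sub_zero, abs_of_pos hT]; linarith
  have hmT : |m T - x| < (b - x) / 2 := by
    simpa [Real.dist_eq] using hδ (show T ∈ Ioi (0:ℝ) from hT) hdist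
  have hmTlt : m T + (b - x) / 2 ≤ b := by
    have := abs_lt.mp hmT
    linarith [this.1, this.2]
  have hsub : {ω | b ≤ M T ω} ⊆ {ω | m T + (b - x) / 2 ≤ M T ω} := by
    intro ω hω; exact le_trans hmTlt hω
  have hmono : (P {ω | b ≤ M T ω}).toReal ≤ (P {ω | m T + (b - x) / 2 ≤ M T ω}).toReal := by
    apply ENNReal.toReal_mono (measure_ne_top P _) (measure_mono hsub)
  have hkey := hconc T hT ((b - x) / 2) (le_of_lt hε)
  have heq : -(((b - x) / 2) ^ 2) / (2 * c ^ 2 * T)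
      = -((b - x) ^ 2) / ((2 * Real.sqrt 2 * c) ^ 2 * T) := by
    have h2 : Real.sqrt 2 ^ 2 = 2 := Real.sq_sqrt (by norm_num)
    have hC2 : (2 * Real.sqrt 2 * c) ^ 2 = 8 * c ^ 2 := by
      have : (2 * Real.sqrt 2 * c) ^ 2 = 2 ^ 2 * Real.sqrt 2 ^ 2 * c ^ 2 := by ring
      rw [this, h2]; ring
    rw [hC2]
    have hc2 : (c : ℝ) ^ 2 ≠ 0 := by positivity
    field_simp
    ring_nf
  calc (P {ω | b ≤ M T ω}).toReal ≤ (P {ω | m T + (b - x) / 2 ≤ M T ω}).toReal := hmono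
    _ ≤ Real.exp (-(((b - x) / 2) ^ 2) / (2 * c ^ 2 * T)) := hkey
    _ = Real.exp (-((b - x) ^ 2) / ((2 * Real.sqrt 2 * c) ^ 2 * T)) := by rw [heq]
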